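/- Correctness of the dynamic load-balancing algorithm: let G be a finite simple graph with degree-based ordering ≺, and let the vertex set V be partitioned into pairwise disjoint tasks W₁, …, W_k with ⋃_j W_j = V. Then Σ_{j} Σ_{v ∈ W_j} Σ_{u ∈ N_v} |N_v ∩ N_u| equals the exact number of triangles in G; i.e., each triangle is counted in exactly one task, the one containing its ≺-least vertex. -/
import Mathlib


/-- Degree-based ordering: `u ≺ v` iff `deg u < deg v`, or degrees equal and `u < v`. -/
def degPrec {V : Type*} [Fintype V] [LinearOrder V] (G : SimpleGraph V) [DecidableRel G.Adj]
    (u v : V) : Prop :=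
  G.degree u < G.degree v ∨ (G.degree u = G.degree v ∧ u < v)

instance {V : Type*} [Fintype V] [LinearOrder V] (G : SimpleGraph V) [DecidableRel G.Adj] :
    DecidableRel (degPrec G) := fun u v => by unfold degPrec; infer_instance

/-- `N_v`: the neighbors of `v` that come after `v` in the degree-based ordering. -/
def Nout {V : Type*} [Fintype V] [LinearOrder V] (G : SimpleGraph V) [DecidableRel G.Adj]
    (v : V) : Finset V :=
  (G.neighborFinset v).filter (fun u => degPrec G v u)


section Aux
variable {V : Type*} [Fintype V] [LinearOrder V] {G : SimpleGraph V} [DecidableRel G.Adj]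

lemma degPrec_asymm {u v : V} (h : degPrec G u v) : ¬ degPrec G v u := by
  rintro (h' | ⟨h1', h2'⟩) <;> rcases h with h | ⟨h1, h2⟩
  · exact absurd h' (lt_asymm h)
  · omega
  · omega
  · exact absurd h2' (lt_asymm h2)

lemma degPrec_trichotomy {u v : V} (h : u ≠ v) : degPrec G u v ∨ degPrec G v u := by
  unfold degPrec
  rcases lt_trichotomy (G.degree u) (G.degree v) with h1 | h1 | h1
  · exact Or.inl (Or.inl h1)
  · rcases lt_or_gt_of_ne h with h2 | h2
    · exact Or.inl (Or.inr ⟨h1, h2⟩)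
    · exact Or.inr (Or.inr ⟨h1.symm, h2⟩)
  · exact Or.inr (Or.inl h1)

lemma degPrec_ne {u v : V} (h : degPrec G u v) : u ≠ v := by
  rintro rfl; exact degPrec_asymm h h

lemma degPrec_trans {u v w : V} (h1 : degPrec G u v) (h2 : degPrec G v w) :
    degPrec G u w := by
  rcases h1 with p | ⟨p1, p2⟩ <;> rcases h2 with q | ⟨q1, q2⟩
  · left; omega
  · left; omega
  · left; omega
  · exact Or.inr ⟨p1.trans q1, p2.trans q2⟩

lemma mem_Nout {u v : V} : u ∈ Nout G v ↔ G.Adj v u ∧ degPrec G v u := by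
  simp [Nout]

/-- sort three pairwise adjacent vertices by `degPrec`. -/
lemma sort3 {a b c : V} (hab : G.Adj a b) (hac : G.Adj a c) (hbc : G.Adj b c) :
    ∃ v u w, degPrec G v u ∧ degPrec G v w ∧ degPrec G u w ∧
      G.Adj v u ∧ G.Adj v w ∧ G.Adj u w ∧ ({a, b, c} : Finset V) = {v, u, w} := by
  have seq : ∀ x y z : V, ({a, b, c} : Finset V) = {x, y, z} →
      ({a, b, c} : Finset V) = {x, z, y} := by
    intro x y z h; rw [h]; ext t; simp; tauto
  rcases degPrec_trichotomy (G := G) hab.ne with h1 | h1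
  · rcases degPrec_trichotomy (G := G) hbc.ne with h2 | h2
    · exact ⟨a, b, c, h1, degPrec_trans h1 h2, h2, hab, hac, hbc, rfl⟩
    · rcases degPrec_trichotomy (G := G) hac.ne with h3 | h3
      · exact ⟨a, c, b, h3, h1, h2, hac, hab, hbc.symm, seq _ _ _ rfl⟩
      · exact ⟨c, a, b, h3, h2, h1, hac.symm, hbc.symm, hab, by ext t; simp; tauto⟩
  · rcases degPrec_trichotomy (G := G) hac.ne with h2 | h2
    · exact ⟨b, a, c, h1, degPrec_trans h1 h2, h2, hab.symm, hbc, hac,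
        by ext t; simp; tauto⟩
    · rcases degPrec_trichotomy (G := G) hbc.ne with h3 | h3
      · exact ⟨b, c, a, h3, h1, h2, hbc, hab.symm, hac.symm, by ext t; simp; tauto⟩
      · exact ⟨c, b, a, h3, h2, h1, hbc.symm, hac.symm, hab.symm, by ext t; simp; tauto⟩

lemma triple_count (G : SimpleGraph V) [DecidableRel G.Adj] :
    ∑ v : V, ∑ u ∈ Nout G v, (Nout G v ∩ Nout G u).card = (G.cliqueFinset 3).card := by
  have h1 : ∑ v : V, ∑ u ∈ Nout G v, (Nout G v ∩ Nout G u).card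
      = (Finset.univ.sigma (fun v : V =>
          (Nout G v).sigma (fun u => Nout G v ∩ Nout G u))).card := by
    rw [Finset.card_sigma]
    exact Finset.sum_congr rfl fun v _ => (Finset.card_sigma _ _).symm
  rw [h1]
  apply Finset.card_bij (fun p _ => ({p.1, p.2.1, p.2.2} : Finset V))
  · rintro ⟨v, u, w⟩ hp
    simp only [Finset.mem_sigma, Finset.mem_univ, true_and, Finset.mem_inter] at hp
    obtain ⟨hu, hw1, hw2⟩ := hp
    rw [mem_Nout] at hu hw1 hw2
    rw [SimpleGraph.mem_cliqueFinset_iff, SimpleGraph.is3Clique_triple_iff]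
    exact ⟨hu.1, hw1.1, hw2.1⟩
  · rintro ⟨v, u, w⟩ hp ⟨v', u', w'⟩ hp' heq
    simp only [Finset.mem_sigma, Finset.mem_univ, true_and, Finset.mem_inter] at hp hp'
    obtain ⟨hu, hw1, hw2⟩ := hp
    obtain ⟨hu', hw1', hw2'⟩ := hp'
    rw [mem_Nout] at hu hw1 hw2 hu' hw1' hw2'
    have mem : ∀ x : V, x ∈ ({v, u, w} : Finset V) ↔ x ∈ ({v', u', w'} : Finset V) := by
      intro x; rw [heq]
    simp only [Finset.mem_insert, Finset.mem_singleton] at mem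
    have hvv : v = v' := by
      have h1 := (mem v).1 (Or.inl rfl)
      have h2 := (mem v').2 (Or.inl rfl)
      rcases h1 with h1 | h1 | h1
      · exact h1
      · subst h1
        rcases h2 with h2 | h2 | h2
        · exact h2.symm
        · subst h2; exact absurd hu.2 (degPrec_asymm hu'.2)
        · subst h2; exact absurd hw1.2 (degPrec_asymm hu'.2)
      · subst h1
        rcases h2 with h2 | h2 | h2
        · exact h2.symm
        · subst h2; exact absurd hu.2 (degPrec_asymm hw1'.2)
        · subst h2; exact absurd hw1.2 (degPrec_asymm hw1'.2)
    subst hvv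
    have huu : u = u' := by
      have h1 := (mem u).1 (Or.inr (Or.inl rfl))
      rcases h1 with h1 | h1 | h1
      · exact absurd h1.symm (degPrec_ne hu.2)
      · exact h1
      · have h2 := (mem u').2 (Or.inr (Or.inl rfl))
        rcases h2 with h2 | h2 | h2
        · exact absurd h2.symm (degPrec_ne hu'.2)
        · exact h2.symm
        · subst h1; subst h2
          exact absurd hw2.2 (degPrec_asymm hw2'.2)
    subst huu
    have hww : w = w' := by
      have h1 := (mem w).1 (Or.inr (Or.inr rfl))
      rcases h1 with rfl | rfl | rfl
      · exact absurd rfl (degPrec_ne hw1.2)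
      · exact absurd rfl (degPrec_ne hw2.2)
      · rfl
    subst hww
    rfl
  · intro t ht
    rw [SimpleGraph.mem_cliqueFinset_iff, SimpleGraph.is3Clique_iff] at ht
    obtain ⟨a, b, c, hab, hac, hbc, rfl⟩ := ht
    obtain ⟨v, u, w, p1, p2, p3, a1, a2, a3, hset⟩ := sort3 hab hac hbc
    refine ⟨⟨v, u, w⟩, ?_, hset.symm⟩
    simp only [Finset.mem_sigma, Finset.mem_univ, true_and, Finset.mem_inter, mem_Nout]
    exact ⟨⟨a1, p1⟩, ⟨a2, p2⟩, ⟨a3, p3⟩⟩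

end Aux

/-- Correctness of the dynamic load-balancing algorithm: partitioning the vertex set into
pairwise disjoint tasks `W₁, …, W_k` covering `V`, the total count
`∑_j ∑_{v ∈ W_j} ∑_{u ∈ N_v} |N_v ∩ N_u|` equals the exact number of triangles. -/
theorem dynamic_load_balancing_correct {V : Type*} [Fintype V] [LinearOrder V]
    (G : SimpleGraph V) [DecidableRel G.Adj] (k : ℕ) (W : Fin k → Finset V)
    (hdisj : ∀ i j : Fin k, i ≠ j → Disjoint (W i) (W j))
    (hcover : Finset.univ.biUnion W = (Finset.univ : Finset V)) :
    ∑ j : Fin k, ∑ v ∈ W j, ∑ u ∈ Nout G v, (Nout G v ∩ Nout G u).card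
      = (G.cliqueFinset 3).card := by
  have h := Finset.sum_biUnion (s := (Finset.univ : Finset (Fin k))) (t := W)
    (f := fun v => ∑ u ∈ Nout G v, (Nout G v ∩ Nout G u).card)
    (fun i _ j _ hij => hdisj i j hij)
  rw [hcover] at h
  rw [← h, triple_count]
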